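/- Let d ∈ ℕ and σ > 0. Let ω be a random vector in ℝ^d with distribution N(0, σ⁻² I_d) and let b be uniformly distributed on [0, 2π], independent of ω. Then for all u, v ∈ ℝ^d, E[ 2 cos(⟨ω, u⟩ + b) cos(⟨ω, v⟩ + b) ] = exp(−‖u − v‖² / (2σ²)). -/

import Mathlib

/-! Averaging over the phase `b` kills the `cos (⟪ω, u + v⟫ + 2 b)` term of the product-to-sum
formula and leaves `cos ⟪ω, u - v⟫`. Its Gaussian mean is the real part of the characteristic
function of `N(0, σ⁻² I_d)`, which the Fourier transform of a Gaussian evaluates to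
`exp (-‖u - v‖² / (2 σ²))`. -/

open MeasureTheory Real
open scoped RealInnerProductSpace ENNReal

noncomputable section

/-- Density of the Gaussian measure N(0, σ⁻² I_d) on ℝ^d. -/
def gaussPdf (d : ℕ) (σ : ℝ) (ω : EuclideanSpace ℝ (Fin d)) : ℝ :=
  (σ ^ 2 / (2 * π)) ^ ((d : ℝ) / 2) * Real.exp (-(σ ^ 2) * ‖ω‖ ^ 2 / 2)

/-- The Gaussian measure N(0, σ⁻² I_d) on ℝ^d. -/
def gaussMeasure (d : ℕ) (σ : ℝ) : Measure (EuclideanSpace ℝ (Fin d)) :=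
  volume.withDensity fun ω => ENNReal.ofReal (gaussPdf d σ ω)

/-- The uniform distribution on [0, 2π]. -/
def unifAngle : Measure ℝ :=
  (ENNReal.ofReal (2 * π))⁻¹ • volume.restrict (Set.Icc (0 : ℝ) (2 * π))

lemma integral_unifAngle {E : Type*} [NormedAddCommGroup E] [NormedSpace ℝ E] (f : ℝ → E) :
    ∫ b, f b ∂unifAngle = (2 * π)⁻¹ • ∫ b in 0..2 * π, f b := by
  rw [unifAngle, integral_smul_measure, integral_Icc_eq_integral_Ioc,
    ← intervalIntegral.integral_of_le two_pi_pos.le, ENNReal.toReal_inv,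
    ENNReal.toReal_ofReal two_pi_pos.le]

lemma integral_cos_add_two_mul_eq_zero (c : ℝ) : ∫ b in 0..2 * π, cos (c + 2 * b) = 0 := by
  simp only [add_comm c, intervalIntegral.integral_comp_mul_add cos two_ne_zero, integral_cos]
  rw [show 2 * (2 * π) + c = c + 2 * π + 2 * π by ring, sin_add_two_pi, sin_add_two_pi]
  simp

lemma integral_unifAngle_two_mul_cos_mul_cos (x y : ℝ) :
    ∫ b, 2 * cos (x + b) * cos (y + b) ∂unifAngle = cos (x - y) := by
  have product_to_sum (b : ℝ) :
      2 * cos (x + b) * cos (y + b) = cos (x - y) + cos (x + y + 2 * b) := by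
    rw [two_mul_cos_mul_cos]; ring_nf
  simp only [integral_unifAngle, product_to_sum]
  have hcont : Continuous fun b => cos (x + y + 2 * b) := by fun_prop
  rw [intervalIntegral.integral_add intervalIntegrable_const (hcont.intervalIntegrable _ _),
    integral_cos_add_two_mul_eq_zero, intervalIntegral.integral_const, smul_eq_mul, smul_eq_mul]
  field_simp
  ring

lemma re_charFun_eq_integral_cos {E : Type*} [NormedAddCommGroup E] [InnerProductSpace ℝ E]
    [MeasurableSpace E] [BorelSpace E] (μ : Measure E) [IsFiniteMeasure μ] (t : E) :
    (charFun μ t).re = ∫ x, cos ⟪x, t⟫ ∂μ := by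
  rw [charFun_eq_integral_innerProbChar, ← RCLike.re_eq_complex_re,
    ← integral_re (BoundedContinuousFunction.integrable μ _)]
  simp [BoundedContinuousFunction.innerProbChar_apply, Complex.exp_ofReal_mul_I_re]

section Gaussian

open Complex

variable (d : ℕ) (σ : ℝ)

lemma gaussPdf_nonneg (ω : EuclideanSpace ℝ (Fin d)) : 0 ≤ gaussPdf d σ ω := by
  unfold gaussPdf; positivity

lemma integral_gaussMeasure {F : Type*} [NormedAddCommGroup F] [NormedSpace ℝ F]
    (f : EuclideanSpace ℝ (Fin d) → F) :
    ∫ ω, f ω ∂gaussMeasure d σ = ∫ ω, gaussPdf d σ ω • f ω := by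
  rw [gaussMeasure, integral_withDensity_eq_integral_toReal_smul (by unfold gaussPdf; fun_prop)
    (ae_of_all _ fun _ => ENNReal.ofReal_lt_top)]
  simp only [ENNReal.toReal_ofReal (gaussPdf_nonneg d σ _)]

lemma gaussPdf_smul_cexp_inner (t ω : EuclideanSpace ℝ (Fin d)) :
    gaussPdf d σ ω • cexp (⟪ω, t⟫ * I) =
      ((σ ^ 2 / (2 * π)) ^ ((d : ℝ) / 2) : ℝ) *
        cexp (-((σ ^ 2 / 2 : ℝ) : ℂ) * (‖ω‖ : ℂ) ^ 2 + I * (⟪t, ω⟫ : ℝ)) := by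
  rw [gaussPdf, real_smul, ofReal_mul, mul_assoc, ofReal_exp, ← Complex.exp_add,
    real_inner_comm]
  push_cast
  ring_nf

theorem charFun_gaussMeasure (hσ : 0 < σ) (t : EuclideanSpace ℝ (Fin d)) :
    charFun (gaussMeasure d σ) t = Real.exp (-‖t‖ ^ 2 / (2 * σ ^ 2)) := by
  have hb : 0 < ((σ ^ 2 / 2 : ℝ) : ℂ).re := by rw [ofReal_re]; positivity
  rw [charFun_apply, integral_gaussMeasure]
  simp only [gaussPdf_smul_cexp_inner]
  rw [integral_const_mul, GaussianFourier.integral_cexp_neg_mul_sq_norm_add hb,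
    finrank_euclideanSpace_fin]
  have normalization :
      (σ ^ 2 / (2 * π)) ^ ((d : ℝ) / 2) * (π / (σ ^ 2 / 2)) ^ ((d : ℝ) / 2) = 1 := by
    rw [← mul_rpow (by positivity) (by positivity)]
    rw [show σ ^ 2 / (2 * π) * (π / (σ ^ 2 / 2)) = 1 by field_simp, one_rpow]
  have hpow : ((π : ℂ) / ((σ ^ 2 / 2 : ℝ) : ℂ)) ^ ((d : ℂ) / 2) =
      ((π / (σ ^ 2 / 2)) ^ ((d : ℝ) / 2) : ℝ) := by
    rw [← ofReal_div, ofReal_cpow (by positivity)]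
    push_cast; rfl
  have hexponent : I ^ 2 * (‖t‖ : ℂ) ^ 2 / (4 * ((σ ^ 2 / 2 : ℝ) : ℂ)) =
      ((-‖t‖ ^ 2 / (2 * σ ^ 2) : ℝ) : ℂ) := by
    have : (σ : ℂ) ≠ 0 := ofReal_ne_zero.mpr hσ.ne'
    push_cast
    field_simp
    norm_num
  rw [hpow, hexponent, ← mul_assoc, ← ofReal_mul, normalization, ofReal_one, one_mul,
    ofReal_exp]

theorem isProbabilityMeasure_gaussMeasure (hσ : 0 < σ) :
    IsProbabilityMeasure (gaussMeasure d σ) := by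
  have h := charFun_gaussMeasure d σ hσ 0
  rw [charFun_zero, norm_zero, zero_pow two_ne_zero, neg_zero, zero_div, Real.exp_zero,
    ofReal_inj] at h
  -- `μ.real univ = 1` rules out `μ univ = ∞`, whose `toReal` is the junk value `0`.
  exact ⟨(ENNReal.toReal_eq_one_iff _).mp h⟩

end Gaussian

/-- For `ω ∼ N(0, σ⁻² I_d)` and `b ∼ Unif[0, 2π]` independent,
`E[2 cos(⟨ω,u⟩ + b) cos(⟨ω,v⟩ + b)] = exp(−‖u − v‖²/(2σ²))`. -/
theorem random_fourier_feature_unbiased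
    (d : ℕ) (σ : ℝ) (hσ : 0 < σ) (u v : EuclideanSpace ℝ (Fin d)) :
    (∫ ω, ∫ b, 2 * Real.cos (⟪ω, u⟫ + b) * Real.cos (⟪ω, v⟫ + b)
        ∂unifAngle ∂(gaussMeasure d σ)) =
      Real.exp (-‖u - v‖ ^ 2 / (2 * σ ^ 2)) := by
  have := isProbabilityMeasure_gaussMeasure d σ hσ
  simp only [integral_unifAngle_two_mul_cos_mul_cos, ← inner_sub_right]
  rw [← re_charFun_eq_integral_cos, charFun_gaussMeasure d σ hσ, Complex.ofReal_re]

end
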